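/- A forest consisting of 2q disjoint stars, each with 2p leaves, is an induced subgraph of a caterpillar with 4pq + 4q − 1 vertices and 4pq leaves. -/

import Mathlib

open SimpleGraph

/-- Sets `A`, `B` are complete to each other: disjoint with all edges between them. -/
def Complete {V : Type} (G : SimpleGraph V) (A B : Set V) : Prop :=
  Disjoint A B ∧ ∀ a ∈ A, ∀ b ∈ B, G.Adj a b

/-- Sets `A`, `B` are anticomplete: disjoint with no edges between them. -/
def Anticomplete {V : Type} (G : SimpleGraph V) (A B : Set V) : Prop :=
  Disjoint A B ∧ ∀ a ∈ A, ∀ b ∈ B, ¬ G.Adj a b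

/-- `V1 = N(u) \ N[v]`. -/
def sideA {V : Type} (G : SimpleGraph V) (u v : V) : Set V :=
  G.neighborSet u \ insert v (G.neighborSet v)

/-- `V2 = N(v) \ N[u]`. -/
def sideB {V : Type} (G : SimpleGraph V) (u v : V) : Set V :=
  G.neighborSet v \ insert u (G.neighborSet u)

/-- `V3 = N(u) ∩ N(v)`. -/
def sideC {V : Type} (G : SimpleGraph V) (u v : V) : Set V :=
  G.neighborSet u ∩ G.neighborSet v

/-- The pair `{a, b}` crosses one of the three pairs of sets `(V1,V2)`, `(V2,V3)`, `(V1,V3)`. -/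
def pivotCross {V : Type} (G : SimpleGraph V) (u v a b : V) : Prop :=
  (a ∈ sideA G u v ∧ b ∈ sideB G u v) ∨ (a ∈ sideB G u v ∧ b ∈ sideA G u v) ∨
  (a ∈ sideB G u v ∧ b ∈ sideC G u v) ∨ (a ∈ sideC G u v ∧ b ∈ sideB G u v) ∨
  (a ∈ sideA G u v ∧ b ∈ sideC G u v) ∨ (a ∈ sideC G u v ∧ b ∈ sideA G u v)

lemma pivotCross_comm {V : Type} {G : SimpleGraph V} {u v a b : V} :
    pivotCross G u v a b ↔ pivotCross G u v b a := by
  unfold pivotCross; tauto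

/-- The pivot `G ∧ uv`: complement the edges between each of the pairs `(V1,V2)`, `(V2,V3)`,
`(V1,V3)` and then swap the labels of `u` and `v`. -/
def pivotGraph {V : Type} (G : SimpleGraph V) (u v : V) : SimpleGraph V :=
  letI := Classical.decEq V
  { Adj := fun x y => x ≠ y ∧
      Xor' (G.Adj (Equiv.swap u v x) (Equiv.swap u v y))
        (pivotCross G u v (Equiv.swap u v x) (Equiv.swap u v y)),
    symm := ⟨by
      rintro x y ⟨hxy, h⟩
      refine ⟨hxy.symm, ?_⟩
      have h1 : G.Adj (Equiv.swap u v x) (Equiv.swap u v y) ↔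
          G.Adj (Equiv.swap u v y) (Equiv.swap u v x) := G.adj_comm _ _
      have h2 : pivotCross G u v (Equiv.swap u v x) (Equiv.swap u v y) ↔
          pivotCross G u v (Equiv.swap u v y) (Equiv.swap u v x) := pivotCross_comm
      rw [h1, h2] at h
      exact h⟩,
    loopless := ⟨fun _ h => h.1 rfl⟩ }

/-- `H` is a pivot-minor of `G`: `H` is obtainable from `G` (up to isomorphism) by a sequence of
vertex deletions and pivots of edges. -/
inductive IsPivotMinor : ∀ {W U : Type}, SimpleGraph W → SimpleGraph U → Prop
  | of_iso {W U : Type} {H : SimpleGraph W} {G : SimpleGraph U} :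
      Nonempty (H ≃g G) → IsPivotMinor H G
  | pivot {W U : Type} {H : SimpleGraph W} {G : SimpleGraph U} (u v : U) :
      G.Adj u v → IsPivotMinor H (pivotGraph G u v) → IsPivotMinor H G
  | delete {W U : Type} {H : SimpleGraph W} {G : SimpleGraph U} (s : Set U) :
      IsPivotMinor H (G.induce s) → IsPivotMinor H G

/-- `G` is obtained from `H` by replacing each edge `uv` of `H` with a path whose length satisfies
`P u v h`: there are internally disjoint induced paths of `G` joining the images of the branch
vertices, covering all of `G`, whose edges are exactly the edges of `G`. -/
def IsEdgeReplacement {U W : Type} (H : SimpleGraph U)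
    (P : ∀ u v : U, H.Adj u v → ℕ → Prop) (G : SimpleGraph W) : Prop :=
  ∃ (x : U ↪ W) (p : ∀ u v : U, H.Adj u v → G.Walk (x u) (x v)),
    (∀ u v h, (p u v h).IsPath) ∧
    (∀ u v h, P u v h (p u v h).length) ∧
    (∀ u v h, p v u h.symm = (p u v h).reverse) ∧
    (∀ u v h w, w ∈ (p u v h).support → w ∈ Set.range x → w = x u ∨ w = x v) ∧
    (∀ u v h k l h', s(u, v) ≠ s(k, l) →
      ∀ w, w ∈ (p u v h).support → w ∈ (p k l h').support → w ∈ Set.range x) ∧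
    (∀ w : W, w ∈ Set.range x ∨ ∃ u v h, w ∈ (p u v h).support) ∧
    (∀ a b : W, G.Adj a b ↔ ∃ u v h, (p u v h).toSubgraph.Adj a b)

/-- `G` is obtained from `H` by replacing each edge with a path whose length satisfies `P`. -/
def IsSubdivisionWith {U W : Type} (H : SimpleGraph U) (P : ℕ → Prop) (G : SimpleGraph W) : Prop :=
  IsEdgeReplacement H (fun _ _ _ n => P n) G

/-- An `F`-filleting of `G`: subdivide (at least once) every edge of `G` not in `F`, and do not
subdivide the edges of `F`. -/
def IsFilleting {U W : Type} (G F : SimpleGraph U) (H : SimpleGraph W) : Prop :=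
  IsEdgeReplacement G (fun u v _ n => (F.Adj u v ∧ n = 1) ∨ (¬ F.Adj u v ∧ 2 ≤ n)) H

/-- Join of `H` with a single new vertex (`H + K_1`), the new vertex being `none`. -/
def addApex {W : Type} (H : SimpleGraph W) : SimpleGraph (Option W) :=
  SimpleGraph.fromRel fun a b =>
    a = none ∨ ∃ u v : W, a = some u ∧ b = some v ∧ H.Adj u v

/-- `F` with ends `a`, `b` is a fuzzy odd path (with length satisfying `P`): it consists of an odd
path from `a` to `b` through all the vertices, possibly together with one extra edge `xy` between
two internal vertices such that `xy` lies in a triangle. -/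
def IsFuzzyOddPath {T : Type} (F : SimpleGraph T) (a b : T) (P : ℕ → Prop) : Prop :=
  ∃ p : F.Walk a b, p.IsPath ∧ Odd p.length ∧ P p.length ∧ (∀ t : T, t ∈ p.support) ∧
    ((∀ c d : T, F.Adj c d ↔ p.toSubgraph.Adj c d) ∨
      ∃ x y : T, x ∈ p.support ∧ y ∈ p.support ∧ x ≠ a ∧ x ≠ b ∧ y ≠ a ∧ y ≠ b ∧
        F.Adj x y ∧ ¬ p.toSubgraph.Adj x y ∧ (∃ z : T, F.Adj x z ∧ F.Adj y z) ∧
        (∀ c d : T, F.Adj c d ↔ (p.toSubgraph.Adj c d ∨ (c = x ∧ d = y) ∨ (c = y ∧ d = x))))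

/-- `G` is a proper fuzzy odd subdivision of `H`: `G` is obtained from `H` by replacing each edge
with a fuzzy odd path of (odd) length at least `3`. -/
def IsProperFuzzyOddSubdivision {U W : Type} (H : SimpleGraph U) (G : SimpleGraph W) : Prop :=
  ∃ (x : U ↪ W) (S : ∀ u v : U, H.Adj u v → Set W)
    (hS : ∀ u v h, x u ∈ S u v h ∧ x v ∈ S u v h),
    (∀ u v h, S v u h.symm = S u v h) ∧
    (∀ u v h w, w ∈ S u v h → w ∈ Set.range x → w = x u ∨ w = x v) ∧
    (∀ u v h k l h', s(u, v) ≠ s(k, l) → ∀ w, w ∈ S u v h → w ∈ S k l h' → w ∈ Set.range x) ∧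
    (∀ w : W, w ∈ Set.range x ∨ ∃ u v h, w ∈ S u v h) ∧
    (∀ a b : W, G.Adj a b → ∃ u v h, a ∈ S u v h ∧ b ∈ S u v h) ∧
    (∀ u v h, IsFuzzyOddPath (G.induce (S u v h))
      ⟨x u, (hS u v h).1⟩ ⟨x v, (hS u v h).2⟩ (fun n => 3 ≤ n))

/-- A mass on a graph `G`. -/
structure IsMass {V : Type} (G : SimpleGraph V) (μ : Set V → ℝ) : Prop where
  map_empty : μ ∅ = 0
  map_univ : μ Set.univ = 1
  mono : ∀ ⦃X Y : Set V⦄, X ⊆ Y → μ X ≤ μ Y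
  subadditive : ∀ X Y : Set V, μ (X ∪ Y) ≤ μ X + μ Y

/-- `N^r[v]`: the ball of radius `r` about `v`. -/
def ball {V : Type} (G : SimpleGraph V) (v : V) (r : ℕ) : Set V :=
  {w | ∃ p : G.Walk v w, p.length ≤ r}

/-- `(G, μ)` is `ε`-coherent. -/
def EpsCoherent {V : Type} (G : SimpleGraph V) (μ : Set V → ℝ) (ε : ℝ) : Prop :=
  (∀ v : V, μ {v} < ε) ∧ (∀ v : V, μ (G.neighborSet v) < ε) ∧
  ∀ A B : Set V, Anticomplete G A B → min (μ A) (μ B) < ε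

/-- `(G, μ)` is `(ε, r)`-coherent. -/
def EpsRCoherent {V : Type} (G : SimpleGraph V) (μ : Set V → ℝ) (ε : ℝ) (r : ℕ) : Prop :=
  (∀ v : V, μ (_root_.ball G v r) < ε) ∧
  ∀ A B : Set V, Anticomplete G A B → min (μ A) (μ B) < ε

/-- `(G, μ)` is `(δ, r)`-focused. -/
def Focused {V : Type} (G : SimpleGraph V) (μ : Set V → ℝ) (δ : ℝ) (r : ℕ) : Prop :=
  ∀ Z : Set V, δ ≤ μ Z → ∃ v : Z, μ Z / 2 ≤ μ (Subtype.val '' _root_.ball (G.induce Z) v r)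

/-- `N[X]`. -/
def closedNbhd {V : Type} (G : SimpleGraph V) (X : Set V) : Set V :=
  X ∪ {w | ∃ a ∈ X, G.Adj a w}

/-- `x` is an `r`-centre of `X`: every vertex of `X` is within distance `r` of `x` in `G[X]`. -/
def IsCentre {V : Type} (G : SimpleGraph V) (X : Set V) (x : V) (hx : x ∈ X) (r : ℕ) : Prop :=
  ∀ y : X, ∃ p : (G.induce X).Walk ⟨x, hx⟩ y, p.length ≤ r

/-- A leaf: a vertex of degree at most 1. -/
def IsLeaf {V : Type} (G : SimpleGraph V) (v : V) : Prop := (G.neighborSet v).Subsingleton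

/-- `P` is a path graph. -/
def IsPathGraph {U : Type} (P : SimpleGraph U) : Prop :=
  ∃ (a b : U) (w : P.Walk a b), w.IsPath ∧ (∀ u : U, u ∈ w.support) ∧
    ∀ x y : U, P.Adj x y ↔ w.toSubgraph.Adj x y

/-- A caterpillar: a tree `T` such that `T − L(T)` is a path. -/
def IsCaterpillar {U : Type} (T : SimpleGraph U) : Prop :=
  T.IsTree ∧ IsPathGraph (T.induce {v | ¬ IsLeaf T v})

/-- Disjoint union of `q` stars, each with `p` leaves: `(i, none)` is the centre of the `i`-th
star and `(i, some j)` its leaves. -/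
def starForest (q p : ℕ) : SimpleGraph (Fin q × Option (Fin p)) :=
  SimpleGraph.fromRel fun a b => a.1 = b.1 ∧ a.2 = none ∧ b.2 ≠ none

/-- The clique number `ω(G)`. -/
noncomputable def cliqueNumber {V : Type} [Fintype V] (G : SimpleGraph V) : ℕ :=
  sSup {n | ∃ s : Finset V, G.IsNClique n s}

/-- The independence number `α(G)`. -/
noncomputable def indepNumber {V : Type} [Fintype V] (G : SimpleGraph V) : ℕ :=
  cliqueNumber Gᶜ

/-!
Hang `2p` leaves on each even-position vertex `0, 2, …, 4q - 2` of a path with `4q - 1`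
vertices. Odd-position spine vertices have two spine neighbours and even-position ones carry
at least two leaves, so the leaves of this tree are exactly the `4pq` hung vertices and the
spine is what remains after deleting them. Each even spine vertex with its leaves is a star,
and the stars are induced because no two even positions are consecutive.
-/

namespace SimpleGraph

variable {V : Type} {G : SimpleGraph V}

theorem isAcyclic_of_unique_lower_neighbor (ρ : V → ℕ)
    (hne : ∀ ⦃v w⦄, G.Adj v w → ρ v ≠ ρ w)
    (huniq : ∀ ⦃v w w'⦄, G.Adj v w → G.Adj v w' → ρ w < ρ v → ρ w' < ρ v → w = w') :
    G.IsAcyclic := by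
  intro v c hc
  classical
  obtain ⟨u, hu, hmax⟩ := c.support.toFinset.exists_max_image ρ ⟨v, by simp⟩
  rw [List.mem_toFinset] at hu
  set c' := c.rotate u hu
  have hc' : c'.IsCycle := hc.rotate hu
  have hnil : ¬ c'.Nil := hc'.not_nil
  have hlow : ∀ w ∈ c'.support, G.Adj u w → ρ w < ρ u := fun w hw hadj =>
    lt_of_le_of_ne (hmax w (by simpa [c'] using hw)) (hne hadj).symm
  -- both cycle-neighbours of the top vertex `u` lie below it, so they coincide
  exact hc'.snd_ne_penultimate <| huniq (c'.adj_snd hnil) (c'.adj_penultimate hnil).symm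
    (hlow _ (c'.getVert_mem_support _) (c'.adj_snd hnil))
    (hlow _ (c'.getVert_mem_support _) (c'.adj_penultimate hnil).symm)

theorem connected_of_exists_lower_neighbor (ρ : V → ℕ) (root : V)
    (hlower : ∀ v ≠ root, ∃ w, G.Adj v w ∧ ρ w < ρ v) : G.Connected := by
  have reach (v : V) : G.Reachable v root := by
    induction v using (measure ρ).wf.induction with
    | _ v ih =>
      by_cases hv : v = root
      · exact hv ▸ .rfl
      · obtain ⟨w, hvw, hw⟩ := hlower v hv
        exact hvw.reachable.trans (ih w hw)
  have : Nonempty V := ⟨root⟩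
  exact .mk fun a b => (reach a).trans (reach b).symm

theorem pathGraph_mem_edges {n : ℕ} {a b : Fin n} (p : (pathGraph n).Walk a b) {i j : Fin n}
    (hij : i.val + 1 = j.val) (hai : a ≤ i) (hjb : j ≤ b) : s(i, j) ∈ p.edges := by
  induction p with
  | nil => rw [Fin.le_def] at hai hjb; omega
  | @cons u v w h p ih =>
    rw [Walk.edges_cons]
    by_cases hstep : u = i ∧ v = j
    · obtain ⟨rfl, rfl⟩ := hstep
      exact List.mem_cons_self
    · refine List.mem_cons_of_mem _ (ih ?_ hjb)
      rw [pathGraph_adj] at h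
      simp only [Fin.le_def, Fin.ext_iff] at *
      omega

end SimpleGraph

theorem not_isLeaf_of_adj {V : Type} {G : SimpleGraph V} {v x y : V} (hx : G.Adj v x)
    (hy : G.Adj v y) (hxy : x ≠ y) : ¬ IsLeaf G v :=
  fun h => hxy (h hx hy)

theorem IsPathGraph.of_iso {V W : Type} {G : SimpleGraph V} {H : SimpleGraph W}
    (hG : IsPathGraph G) (e : G ≃g H) : IsPathGraph H := by
  obtain ⟨a, b, w, hw, hsupp, hadj⟩ := hG
  refine ⟨e a, e b, w.map e.toHom, hw.map e.injective, fun x => ?_, fun x y => ?_⟩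
  · simpa [Walk.support_map] using ⟨e.symm x, hsupp _, by simp⟩
  · obtain ⟨x, rfl⟩ := e.surjective x
    obtain ⟨y, rfl⟩ := e.surjective y
    rw [e.map_adj_iff, hadj, Walk.adj_toSubgraph_iff_mem_edges, Walk.adj_toSubgraph_iff_mem_edges,
      Walk.edges_map, ← Sym2.map_mk]
    exact (List.mem_map_of_injective (Sym2.map.injective e.injective)).symm

theorem isPathGraph_pathGraph {n : ℕ} (hn : 0 < n) : IsPathGraph (pathGraph n) := by
  let first : Fin n := ⟨0, hn⟩
  let last : Fin n := ⟨n - 1, by omega⟩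
  obtain ⟨p⟩ := pathGraph_preconnected n first last
  have hedge (i j : Fin n) (hij : i.val + 1 = j.val) : s(i, j) ∈ p.bypass.edges :=
    pathGraph_mem_edges _ hij (Nat.zero_le _) (Nat.le_sub_one_of_lt j.isLt)
  refine ⟨first, last, p.bypass, p.bypass_isPath, fun u => ?_, fun x y => ?_⟩
  · by_cases hu : u.val + 1 < n
    · exact p.bypass.fst_mem_support_of_mem_edges (hedge u ⟨u + 1, hu⟩ rfl)
    · convert p.bypass.end_mem_support
      ext
      simp only [last]
      omega
  · rw [Walk.adj_toSubgraph_iff_mem_edges]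
    refine ⟨fun h => ?_, fun h => p.bypass.adj_of_mem_edges h⟩
    rcases pathGraph_adj.mp h with h | h
    · exact hedge x y h
    · exact Sym2.eq_swap ▸ hedge y x h

/-- Spine `pathGraph n`, with the vertex `c : ι` hung at spine vertex `f c`. -/
def caterpillarGraph (n : ℕ) {ι : Type} (f : ι → Fin n) : SimpleGraph (Fin n ⊕ ι) where
  Adj
    | .inl a, .inl b => (pathGraph n).Adj a b
    | .inl a, .inr c => a = f c
    | .inr c, .inl a => a = f c
    | .inr _, .inr _ => False
  symm := ⟨by
    rintro (a | c) (b | d) h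
    exacts [h.symm, h, h, h]⟩
  loopless := ⟨by
    rintro (a | c) h
    exacts [h.ne rfl, h]⟩

namespace caterpillarGraph

variable {n : ℕ} {ι : Type} {f : ι → Fin n}

@[simp] theorem adj_inl_inl {a b : Fin n} :
    (caterpillarGraph n f).Adj (.inl a) (.inl b) ↔ (pathGraph n).Adj a b := Iff.rfl

@[simp] theorem adj_inl_inr {a : Fin n} {c : ι} :
    (caterpillarGraph n f).Adj (.inl a) (.inr c) ↔ a = f c := Iff.rfl

@[simp] theorem adj_inr_inl {a : Fin n} {c : ι} :
    (caterpillarGraph n f).Adj (.inr c) (.inl a) ↔ a = f c := Iff.rfl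

@[simp] theorem not_adj_inr_inr {c d : ι} : ¬ (caterpillarGraph n f).Adj (.inr c) (.inr d) :=
  id

theorem isTree (hn : 0 < n) : (caterpillarGraph n f).IsTree := by
  -- `ρ` is the distance from the spine end `inl 0`; the lower neighbour of a vertex is its parent
  let ρ : Fin n ⊕ ι → ℕ := Sum.elim Fin.val fun c => f c + 1
  refine ⟨connected_of_exists_lower_neighbor ρ (.inl ⟨0, hn⟩) ?_,
    isAcyclic_of_unique_lower_neighbor ρ ?_ ?_⟩
  · rintro (a | c) hv
    · have ha : a.val ≠ 0 := fun h => hv (congrArg Sum.inl (Fin.ext h))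
      refine ⟨.inl ⟨a - 1, by omega⟩, ?_, ?_⟩
      · simp only [adj_inl_inl, pathGraph_adj]
        omega
      · simp only [ρ, Sum.elim_inl]
        omega
    · exact ⟨.inl (f c), rfl, Nat.lt_succ_self _⟩
  · rintro (a | c) (b | d) h <;>
      simp only [adj_inl_inl, adj_inl_inr, adj_inr_inl, not_adj_inr_inr, pathGraph_adj] at h <;>
      simp only [ρ, Sum.elim_inl, Sum.elim_inr, h] <;> omega
  · rintro (a | c) (b | d) (b' | d') h h' hb hb' <;>
      simp only [adj_inl_inl, adj_inl_inr, adj_inr_inl, not_adj_inr_inr, pathGraph_adj] at h h' <;>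
      simp only [ρ, Sum.elim_inl, Sum.elim_inr] at hb hb' <;>
      first | omega | (congr 1; ext; omega)

theorem isLeaf_inr (c : ι) : IsLeaf (caterpillarGraph n f) (.inr c) := by
  rintro (a | d) ha (b | d') hb
  · simp only [mem_neighborSet, adj_inr_inl] at ha hb
    rw [ha, hb]
  all_goals simp at ha hb

theorem not_isLeaf_inl_of_lt {a : Fin n} (h0 : 0 < a.val) (h1 : a.val + 1 < n) :
    ¬ IsLeaf (caterpillarGraph n f) (.inl a) :=
  not_isLeaf_of_adj (x := .inl ⟨a - 1, by omega⟩) (y := .inl ⟨a + 1, h1⟩)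
    (by simp only [adj_inl_inl, pathGraph_adj]; omega) (by simp [pathGraph_adj])
    (by simp only [ne_eq, Sum.inl.injEq, Fin.ext_iff]; omega)

theorem not_isLeaf_inl_of_ne {a : Fin n} {c c' : ι} (hc : f c = a) (hc' : f c' = a)
    (hne : c ≠ c') : ¬ IsLeaf (caterpillarGraph n f) (.inl a) :=
  not_isLeaf_of_adj (x := .inr c) (y := .inr c') hc.symm hc'.symm (by simpa using hne)

theorem setOf_isLeaf (hspine : ∀ a, ¬ IsLeaf (caterpillarGraph n f) (.inl a)) :
    {v | IsLeaf (caterpillarGraph n f) v} = Set.range Sum.inr := by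
  ext (a | c)
  · simpa using hspine a
  · simpa using isLeaf_inr c

theorem isCaterpillar (hn : 0 < n) (hspine : ∀ a, ¬ IsLeaf (caterpillarGraph n f) (.inl a)) :
    IsCaterpillar (caterpillarGraph n f) := by
  refine ⟨isTree hn, ?_⟩
  have hS : {v | ¬ IsLeaf (caterpillarGraph n f) v} = Set.range Sum.inl := by
    rw [← Set.compl_ofPred, setOf_isLeaf hspine, Set.compl_range_inr]
  rw [hS]
  exact (isPathGraph_pathGraph hn).of_iso
    { toEquiv := Equiv.ofInjective _ Sum.inl_injective
      map_rel_iff' := Iff.rfl }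

variable {p q : ℕ}

def starForestMap (g : Fin q → Fin n) : Fin q × Option (Fin p) → Fin n ⊕ (Fin q × Fin p)
  | (i, none) => .inl (g i)
  | (i, some j) => .inr (i, j)

def starForestEmbedding (g : Fin q ↪ Fin n) (hg : ∀ i j, ¬ (pathGraph n).Adj (g i) (g j)) :
    starForest q p ↪g caterpillarGraph n fun c : Fin q × Fin p => g c.1 where
  toFun := starForestMap g
  inj' := by
    rintro ⟨i, _ | j⟩ ⟨i', _ | j'⟩ h <;> simp_all [starForestMap]
  map_rel_iff' := by
    intro x y
    change (caterpillarGraph n _).Adj (starForestMap g x) (starForestMap g y) ↔ _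
    rcases x with ⟨i, _ | j⟩ <;> rcases y with ⟨i', _ | j'⟩ <;>
      simp [starForestMap, starForest, hg, eq_comm]

end caterpillarGraph

def evenSpine (q : ℕ) : Fin (2 * q) ↪ Fin (4 * q - 1) where
  toFun i := ⟨2 * i, by omega⟩
  inj' i j h := by simp only [Fin.mk.injEq] at h; omega

@[simp] theorem evenSpine_val (q : ℕ) (i : Fin (2 * q)) : (evenSpine q i : ℕ) = 2 * i := rfl

theorem evenSpine_not_adj (q : ℕ) (i j : Fin (2 * q)) :
    ¬ (pathGraph (4 * q - 1)).Adj (evenSpine q i) (evenSpine q j) := by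
  simp only [pathGraph_adj, evenSpine_val]
  omega

theorem not_isLeaf_evenSpine_inl {p q : ℕ} (hp : 0 < p) (a : Fin (4 * q - 1)) :
    ¬ IsLeaf (caterpillarGraph (4 * q - 1) fun c : Fin (2 * q) × Fin (2 * p) => evenSpine q c.1)
      (.inl a) := by
  rcases Nat.even_or_odd a.val with ⟨i, hi⟩ | ⟨i, hi⟩
  · have hi' : i < 2 * q := by omega
    refine caterpillarGraph.not_isLeaf_inl_of_ne (c := (⟨i, hi'⟩, ⟨0, by omega⟩))
      (c' := (⟨i, hi'⟩, ⟨1, by omega⟩)) ?_ ?_ (by simp)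
    all_goals ext; simp only [evenSpine_val]; omega
  · exact caterpillarGraph.not_isLeaf_inl_of_lt (by omega) (by omega)

/-- a forest of `2q` stars, each with `2p` leaves, is an induced subgraph of a
caterpillar with `4pq + 4q − 1` vertices and `4pq` leaves. -/
theorem starForest_in_caterpillar (p q : ℕ) (hp : 0 < p) (hq : 0 < q) :
    ∃ (U : Type) (_ : Fintype U) (T : SimpleGraph U),
      IsCaterpillar T ∧ Nat.card U = 4 * p * q + 4 * q - 1 ∧
      {v : U | IsLeaf T v}.ncard = 4 * p * q ∧
      Nonempty (starForest (2 * q) (2 * p) ↪g T) := by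
  have hspine := not_isLeaf_evenSpine_inl (q := q) hp
  refine ⟨_, inferInstance, _, caterpillarGraph.isCaterpillar (by omega) hspine, ?_, ?_,
    ⟨caterpillarGraph.starForestEmbedding (evenSpine q) (evenSpine_not_adj q)⟩⟩
  · simp only [Nat.card_eq_fintype_card, Fintype.card_sum, Fintype.card_prod, Fintype.card_fin]
    grind
  · rw [caterpillarGraph.setOf_isLeaf hspine, Set.ncard_range_of_injective Sum.inr_injective,
      Nat.card_eq_fintype_card, Fintype.card_prod, Fintype.card_fin, Fintype.card_fin]
    ring
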